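/- Let M1 < M2 be coprime integers with M1 ≥ 2, let D_cp = {m M2 : 0 ≤ m ≤ 2M1−1} ∪ {m M1 : 1 ≤ m ≤ M2−1} be the co-prime array position set, and let k be an integer with 1 ≤ k ≤ M1−1. Then at the grating-lobe point Δ = 2k/M1, the array sum is exactly Σ_{d∈D_cp} exp(iπ d Δ) = M2 − 1; consequently the side lobe height is G(Δ; D_cp) = (M2−1)²/M² where M = 2M1 + M2 − 1. -/

import Mathlib

open Finset

/-!
With `ζ = exp(2πi/M1)`, the phase of position `d` at `Δ = 2k/M1` is `ζ^(d k)`. On subarray 2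
(`d = n M1`) every phase is `1`, contributing `M2 − 1`. On subarray 1 (`d = m M2`) the phases are
the powers of `ζ^(M2 k)`, which is an `M1`-th root of unity different from `1` because `M1` is
coprime to `M2` and does not divide `k`; summed over `2 M1` consecutive powers they cancel.
-/

/-- Co-prime array position set. -/
def Dcp (M1 M2 : ℕ) : Finset ℕ :=
  (Finset.range (2 * M1)).image (fun m => m * M2) ∪
    (Finset.Icc 1 (M2 - 1)).image (fun m => m * M1)

theorem cexp_pi_mul_two_div_eq_pow (N k d : ℕ) :
    Complex.exp (Complex.I * Real.pi * (d : ℝ) * (2 * (k : ℝ) / (N : ℝ))) =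
      Complex.exp (2 * Real.pi * Complex.I / N) ^ (d * k) := by
  rw [← Complex.exp_nat_mul]
  congr 1
  push_cast
  ring

theorem geom_sum_range_mul_eq_zero {R : Type*} [CommRing R] [IsDomain R] {x : R} {n : ℕ}
    (hx : x ≠ 1) (hxn : x ^ n = 1) (q : ℕ) : ∑ i ∈ range (q * n), x ^ i = 0 := by
  have h := geom_sum_mul x (q * n)
  rw [pow_mul', hxn, one_pow, sub_self] at h
  exact (mul_eq_zero.1 h).resolve_right (sub_ne_zero.2 hx)

theorem disjoint_Dcp_subarrays {M1 M2 : ℕ} (hc : Nat.Coprime M1 M2) :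
    Disjoint ((range (2 * M1)).image (fun m => m * M2))
      ((Icc 1 (M2 - 1)).image (fun n => n * M1)) := by
  simp only [disjoint_left, mem_image, mem_range, mem_Icc, not_exists, not_and]
  rintro _ ⟨m, -, rfl⟩ n ⟨hn1, hn2⟩ hmn
  have hdvd : M2 ∣ n := hc.symm.dvd_of_dvd_mul_right ⟨m, by rw [hmn, mul_comm]⟩
  have := Nat.le_of_dvd (by omega) hdvd
  omega

theorem sum_Dcp {M : Type*} [AddCommMonoid M] {M1 M2 : ℕ} (hM1 : 0 < M1) (hM2 : 0 < M2)
    (hc : Nat.Coprime M1 M2) (f : ℕ → M) :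
    ∑ d ∈ Dcp M1 M2, f d =
      ∑ m ∈ range (2 * M1), f (m * M2) + ∑ n ∈ Icc 1 (M2 - 1), f (n * M1) := by
  rw [Dcp, sum_union (disjoint_Dcp_subarrays hc),
    sum_image fun _ _ _ _ h => Nat.eq_of_mul_eq_mul_right hM2 h,
    sum_image fun _ _ _ _ h => Nat.eq_of_mul_eq_mul_right hM1 h]

theorem IsPrimitiveRoot.sum_subarray1_eq_zero {R : Type*} [CommRing R] [IsDomain R] {ζ : R}
    {M1 M2 k : ℕ} (hζ : IsPrimitiveRoot ζ M1) (hc : Nat.Coprime M1 M2) (hk0 : 0 < k)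
    (hk : k < M1) : ∑ m ∈ range (2 * M1), ζ ^ (m * M2 * k) = 0 := by
  have hne : ζ ^ (M2 * k) ≠ 1 := by
    intro h
    rw [hζ.pow_eq_one_iff_dvd] at h
    exact absurd (Nat.le_of_dvd hk0 (hc.dvd_of_dvd_mul_left h)) (by omega)
  have hpow : (ζ ^ (M2 * k)) ^ M1 = 1 := by rw [pow_right_comm, hζ.pow_eq_one, one_pow]
  have hterm (m : ℕ) : ζ ^ (m * M2 * k) = (ζ ^ (M2 * k)) ^ m := by rw [← pow_mul]; ring_nf
  simp only [hterm]
  exact geom_sum_range_mul_eq_zero hne hpow 2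

theorem sum_subarray2_eq_of_pow_eq_one {R : Type*} [Semiring R] {ζ : R} {M1 : ℕ}
    (hζ : ζ ^ M1 = 1) (M2 k : ℕ) :
    ∑ n ∈ Icc 1 (M2 - 1), ζ ^ (n * M1 * k) = ((M2 - 1 : ℕ) : R) := by
  simp_rw [mul_comm _ M1, mul_assoc, pow_mul, hζ, one_pow, sum_const, Nat.card_Icc,
    Nat.add_sub_cancel, nsmul_one]

theorem coprime_grating_lobe_subarray2_general (M1 M2 : ℕ) (h12 : M1 < M2)
    (hc : Nat.Coprime M1 M2) (k : ℕ) (hk1 : 1 ≤ k) (hk2 : k ≤ M1 - 1) :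
    (∑ d ∈ Dcp M1 M2,
        Complex.exp (Complex.I * Real.pi * (d : ℝ) * (2 * (k : ℝ) / (M1 : ℝ)))) =
      ((M2 : ℂ) - 1) ∧
    (1 / (2 * (M1 : ℝ) + (M2 : ℝ) - 1) ^ 2) *
        (‖(∑ d ∈ Dcp M1 M2,
          Complex.exp (Complex.I * Real.pi * (d : ℝ) * (2 * (k : ℝ) / (M1 : ℝ))))‖) ^ 2 =
      ((M2 : ℝ) - 1) ^ 2 / (2 * (M1 : ℝ) + (M2 : ℝ) - 1) ^ 2 := by
  have hM1 : 0 < M1 := by omega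
  have hM2 : 0 < M2 := by omega
  have hζ := Complex.isPrimitiveRoot_exp M1 hM1.ne'
  have hsum : (∑ d ∈ Dcp M1 M2,
      Complex.exp (Complex.I * Real.pi * (d : ℝ) * (2 * (k : ℝ) / (M1 : ℝ)))) =
        ((M2 - 1 : ℕ) : ℂ) := by
    simp_rw [cexp_pi_mul_two_div_eq_pow, sum_Dcp hM1 hM2 hc,
      hζ.sum_subarray1_eq_zero hc hk1 (by omega), sum_subarray2_eq_of_pow_eq_one hζ.pow_eq_one,
      zero_add]
  refine ⟨by rw [hsum, Nat.cast_pred hM2], ?_⟩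
  rw [hsum, Complex.norm_natCast, Nat.cast_pred hM2]
  ring

/-- at the grating-lobe point `Δ = 2k/M1` with `1 ≤ k ≤ M1−1`, the
co-prime array sum equals `M2 − 1`; hence the side lobe height is
`(M2−1)²/M²` with `M = 2M1 + M2 − 1`. -/
theorem coprime_grating_lobe_subarray2 (M1 M2 : ℕ) (hM1 : 2 ≤ M1) (h12 : M1 < M2)
    (hc : Nat.Coprime M1 M2) (k : ℕ) (hk1 : 1 ≤ k) (hk2 : k ≤ M1 - 1) :
    (∑ d ∈ Dcp M1 M2,
        Complex.exp (Complex.I * Real.pi * (d : ℝ) * (2 * (k : ℝ) / (M1 : ℝ)))) =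
      ((M2 : ℂ) - 1) ∧
    (1 / (2 * (M1 : ℝ) + (M2 : ℝ) - 1) ^ 2) *
        (‖(∑ d ∈ Dcp M1 M2,
          Complex.exp (Complex.I * Real.pi * (d : ℝ) * (2 * (k : ℝ) / (M1 : ℝ))))‖) ^ 2 =
      ((M2 : ℝ) - 1) ^ 2 / (2 * (M1 : ℝ) + (M2 : ℝ) - 1) ^ 2 :=
  coprime_grating_lobe_subarray2_general M1 M2 h12 hc k hk1 hk2
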